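/- Let n and d be integers with 1 ≤ d ≤ n, and let c : F_2^n → F_2 satisfy c_β = 0 for every β with wt(β) ≥ d. Define s : F_2^n → F_2 by s_α = ⊕_{β ⪯ α} c_β. Then for every α ∈ F_2^n, s_α = ⊕_{γ ⪯ α, 0 ≤ wt(γ) ≤ d−1} ( ∑_{i=0}^{d−1−wt(γ)} C(wt(α)−wt(γ), i) mod 2 ) · s_γ, where the inner sum of binomial coefficients is reduced modulo 2. -/

import Mathlib

open Finset

/-- Hamming weight of a vector in `F_2^n`. -/
def wt {n : ℕ} (α : Fin n → ZMod 2) : ℕ :=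
  (Finset.univ.filter fun i => α i = 1).card

/-- `preceq β α` means `β ⪯ α`, i.e. `β i ≤ α i` coordinatewise. -/
def preceq {n : ℕ} (β α : Fin n → ZMod 2) : Prop :=
  ∀ i, β i = 1 → α i = 1

instance {n : ℕ} (β α : Fin n → ZMod 2) : Decidable (preceq β α) :=
  inferInstanceAs (Decidable (∀ i, β i = 1 → α i = 1))

/-- ANF coefficient of a Boolean function at `α` (Möbius inversion over the Boolean lattice). -/
def anf {n : ℕ} (f : (Fin n → ZMod 2) → ZMod 2) (α : Fin n → ZMod 2) : ZMod 2 :=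
  ∑ β ∈ Finset.univ.filter (fun β => preceq β α), f β

/-- Algebraic degree of a Boolean function: the largest weight of a monomial
with nonzero ANF coefficient. -/
def degB {n : ℕ} (f : (Fin n → ZMod 2) → ZMod 2) : ℕ :=
  (Finset.univ.filter fun α => anf f α ≠ 0).sup wt

/-- Algebraic immunity: minimum degree of a nonzero annihilator of `f` or of `f ⊕ 1`. -/
noncomputable def AI {n : ℕ} (f : (Fin n → ZMod 2) → ZMod 2) : ℕ :=
  sInf {d | ∃ h : (Fin n → ZMod 2) → ZMod 2, h ≠ 0 ∧ degB h = d ∧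
    ((∀ x, f x * h x = 0) ∨ (∀ x, (f x + 1) * h x = 0))}

/-- Elementary symmetric polynomial of degree `i` on `n` variables, as a Boolean function. -/
def esymB (n i : ℕ) (x : Fin n → ZMod 2) : ZMod 2 :=
  ∑ α ∈ Finset.univ.filter (fun α : Fin n → ZMod 2 => wt α = i),
    ∏ j ∈ Finset.univ.filter (fun j => α j = 1), x j

/-!
Identify `F_2^n` with the subsets of `Fin n`. For `C ⊆ A` with `#C ≤ d - 1`, the binomial sum
counts the `D` with `C ⊆ D ⊆ A` and `#D ≤ d - 1`, so after exchanging the order of summation the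
right-hand side becomes `∑_{D ⊆ A, #D ≤ d - 1} ∑_{C ⊆ D} s C`. In characteristic 2 the
subset-sum transform `c ↦ s` is an involution (each `B ⊂ D` is counted `2 ^ (#D - #B)` times),
so the inner sum is `c D`, and since `c` vanishes in weight `≥ d` what remains is `s A`.
-/

namespace Finset

variable {ι R : Type*} [DecidableEq ι]

theorem card_filter_powerset_card_le (S : Finset ι) (k : ℕ) :
    #{E ∈ S.powerset | #E ≤ k} = ∑ i ∈ range (k + 1), (#S).choose i := by
  have h : {E ∈ S.powerset | #E ≤ k} = (range (k + 1)).biUnion (S.powersetCard ·) := by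
    ext E
    simp [mem_powersetCard, and_comm]
  rw [h, card_biUnion ((S.pairwise_disjoint_powersetCard).set_pairwise _)]
  simp only [card_powersetCard]

theorem card_filter_Icc_card_le {C A : Finset ι} (hCA : C ⊆ A) {m : ℕ} (hC : #C ≤ m) :
    #{D ∈ Icc C A | #D ≤ m} = ∑ i ∈ range (m - #C + 1), (#A - #C).choose i := by
  have hdisj : ∀ E ∈ (A \ C).powerset, Disjoint C E :=
    fun E hE => disjoint_of_subset_right (mem_powerset.1 hE) disjoint_sdiff
  have hinj : Set.InjOn (C ∪ ·) ↑(A \ C).powerset := fun E hE F hF hEF => by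
    rw [← union_sdiff_cancel_left (hdisj E hE), ← union_sdiff_cancel_left (hdisj F hF)]
    exact congrArg (· \ C) hEF
  rw [Icc_eq_image_powerset hCA, filter_image, card_image_of_injOn (hinj.mono (filter_subset _ _)),
    ← card_sdiff_of_subset hCA, ← card_filter_powerset_card_le]
  congr 1
  refine filter_congr fun E hE => ?_
  rw [card_union_of_disjoint (hdisj E hE)]
  omega

theorem sum_powerset_sum_powerset_of_charTwo [Semiring R] [CharP R 2] (c : Finset ι → R)
    (D : Finset ι) : ∑ C ∈ D.powerset, ∑ B ∈ C.powerset, c B = c D := by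
  rw [sum_comm' (t' := D.powerset) (s' := fun B => Icc B D)]
  · rw [sum_eq_single_of_mem D (mem_powerset_self D)]
    · simp
    · intro B hB hBD
      have hBD : #B < #D := card_lt_card (ssubset_of_subset_of_ne (mem_powerset.1 hB) hBD)
      rw [sum_const, card_Icc_finset (mem_powerset.1 hB), nsmul_eq_mul, Nat.cast_pow,
        Nat.cast_ofNat, CharTwo.two_eq_zero, zero_pow (by omega), zero_mul]
  · intro C B
    simp only [mem_powerset, mem_Icc]
    exact ⟨fun h => ⟨⟨h.2, h.1⟩, h.2.trans h.1⟩, fun h => ⟨h.1.2, h.1.1⟩⟩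

theorem sum_powerset_eq_sum_powerset_card_le [Semiring R] [CharP R 2] (m : ℕ)
    (c : Finset ι → R) (hc : ∀ B, m < #B → c B = 0) (A : Finset ι) :
    ∑ B ∈ A.powerset, c B = ∑ C ∈ A.powerset with #C ≤ m,
      ((∑ i ∈ range (m - #C + 1), (#A - #C).choose i : ℕ) : R) * ∑ B ∈ C.powerset, c B := by
  calc ∑ B ∈ A.powerset, c B = ∑ D ∈ A.powerset with #D ≤ m, c D :=
        (sum_filter_of_ne fun D _ h => not_lt.1 (mt (hc D) h)).symm
    _ = ∑ D ∈ A.powerset with #D ≤ m, ∑ C ∈ D.powerset, ∑ B ∈ C.powerset, c B := by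
        simp only [sum_powerset_sum_powerset_of_charTwo]
    _ = ∑ C ∈ A.powerset with #C ≤ m, ∑ D ∈ Icc C A with #D ≤ m, ∑ B ∈ C.powerset, c B := by
        refine sum_comm' fun D C => ?_
        simp only [mem_filter, mem_powerset, mem_Icc]
        constructor
        · rintro ⟨⟨hDA, hD⟩, hCD⟩
          exact ⟨⟨⟨hCD, hDA⟩, hD⟩, hCD.trans hDA, (card_le_card hCD).trans hD⟩
        · rintro ⟨⟨⟨hCD, hDA⟩, hD⟩, -⟩
          exact ⟨⟨hDA, hD⟩, hCD⟩
    _ = _ := sum_congr rfl fun C hC => by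
        rw [mem_filter, mem_powerset] at hC
        rw [sum_const, card_filter_Icc_card_le hC.1 hC.2, nsmul_eq_mul]

end Finset

def supportEquiv (ι : Type*) [Fintype ι] [DecidableEq ι] : (ι → ZMod 2) ≃ Finset ι where
  toFun γ := {i | γ i = 1}
  invFun S i := if i ∈ S then 1 else 0
  left_inv γ := funext fun i => by
    rcases (by decide : ∀ x : ZMod 2, x = 0 ∨ x = 1) (γ i) with h | h <;> simp [h]
  right_inv S := by ext; simp

theorem wt_eq_card_supportEquiv {n : ℕ} (γ : Fin n → ZMod 2) : wt γ = #(supportEquiv _ γ) := rfl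

theorem preceq_iff_supportEquiv_subset {n : ℕ} {β α : Fin n → ZMod 2} :
    preceq β α ↔ supportEquiv _ β ⊆ supportEquiv _ α := by
  simp [preceq, supportEquiv, subset_iff]

theorem stmt_9_general {n : ℕ} (d : ℕ)
    (c s : (Fin n → ZMod 2) → ZMod 2)
    (hc : ∀ β : Fin n → ZMod 2, d ≤ wt β → c β = 0)
    (hs : ∀ α : Fin n → ZMod 2, s α = ∑ β ∈ Finset.univ.filter (fun β => preceq β α), c β) :
    ∀ α : Fin n → ZMod 2,
      s α = ∑ γ ∈ Finset.univ.filter (fun γ => preceq γ α ∧ wt γ ≤ d - 1),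
        (((∑ i ∈ Finset.range (d - 1 - wt γ + 1), Nat.choose (wt α - wt γ) i : ℕ) : ZMod 2)) * s γ := by
  set e := supportEquiv (Fin n)
  have hs' : ∀ γ, s γ = ∑ B ∈ (e γ).powerset, c (e.symm B) := fun γ => by
    rw [hs]
    exact sum_equiv e (fun β => by simp [preceq_iff_supportEquiv_subset, e]) (fun β _ => by simp)
  intro α
  rw [hs' α, sum_powerset_eq_sum_powerset_card_le (d - 1) (fun B => c (e.symm B))
    (fun B hB => hc _ (by rw [wt_eq_card_supportEquiv, Equiv.apply_symm_apply]; omega))]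
  symm
  refine sum_equiv e (fun γ => by simp [preceq_iff_supportEquiv_subset, wt_eq_card_supportEquiv, e])
    (fun γ _ => by rw [hs' γ, wt_eq_card_supportEquiv, wt_eq_card_supportEquiv])

theorem stmt_9 {n : ℕ} (d : ℕ) (hd1 : 1 ≤ d) (hdn : d ≤ n)
    (c s : (Fin n → ZMod 2) → ZMod 2)
    (hc : ∀ β : Fin n → ZMod 2, d ≤ wt β → c β = 0)
    (hs : ∀ α : Fin n → ZMod 2, s α = ∑ β ∈ Finset.univ.filter (fun β => preceq β α), c β) :
    ∀ α : Fin n → ZMod 2,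
      s α = ∑ γ ∈ Finset.univ.filter (fun γ => preceq γ α ∧ wt γ ≤ d - 1),
        (((∑ i ∈ Finset.range (d - 1 - wt γ + 1), Nat.choose (wt α - wt γ) i : ℕ) : ZMod 2)) * s γ :=
  stmt_9_general d c s hc hs
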